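/- Let (Δ, γ) be a voltage graph with voltages in a group G such that the derived graph Γ = Δ ×_γ G is connected, let φ : Γ → Δ be the canonical covering, let v₀ be a base vertex of Γ with φ(v₀) = v_Δ, and let μ : Δ_⊤ → Δ be a covering with Δ_⊤ connected and v_⊤ a vertex of Δ_⊤ with μ(v_⊤) = v_Δ. Define ν : Γ → Δ_⊤ by path lifting: for each vertex v of Γ, choose a path p in Γ from v₀ to v and let ν(v) be the terminal vertex of the unique lift under μ of the walk φ(p) starting at v_⊤ (and define ν on edges analogously). Then ν is well-defined and is a covering satisfying μ∘ν = φ if and only if μ is a good covering of (Δ, γ). -/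

import Mathlib

namespace VG

/-- A graph (directed multigraph): vertices, edges, initial and terminal endpoint maps. -/
structure MGraph : Type 1 where
  V : Type
  E : Type
  ι : E → V
  τ : E → V

/-- A homomorphism of graphs. -/
structure Hom (Γ Δ : MGraph) where
  onV : Γ.V → Δ.V
  onE : Γ.E → Δ.E
  map_ι : ∀ e, Δ.ι (onE e) = onV (Γ.ι e)
  map_τ : ∀ e, Δ.τ (onE e) = onV (Γ.τ e)

/-- Composition of homomorphisms. -/
def Hom.comp {Γ₁ Γ₂ Γ₃ : MGraph} (g : Hom Γ₂ Γ₃) (f : Hom Γ₁ Γ₂) : Hom Γ₁ Γ₃ where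
  onV := g.onV ∘ f.onV
  onE := g.onE ∘ f.onE
  map_ι e := by simp only [Function.comp_apply]; rw [g.map_ι, f.map_ι]
  map_τ e := by simp only [Function.comp_apply]; rw [g.map_τ, f.map_τ]

/-- An isomorphism of graphs: a homomorphism bijective on vertices and on edges. -/
structure Iso (Γ Δ : MGraph) where
  onV : Γ.V ≃ Δ.V
  onE : Γ.E ≃ Δ.E
  map_ι : ∀ e, Δ.ι (onE e) = onV (Γ.ι e)
  map_τ : ∀ e, Δ.τ (onE e) = onV (Γ.τ e)

def Iso.toHom {Γ Δ : MGraph} (f : Iso Γ Δ) : Hom Γ Δ :=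
  ⟨f.onV, f.onE, f.map_ι, f.map_τ⟩

/-- The automorphisms of a graph. -/
abbrev Aut (Γ : MGraph) := Iso Γ Γ

theorem Iso.ext' {Γ Δ : MGraph} {f g : Iso Γ Δ} (hV : f.onV = g.onV) (hE : f.onE = g.onE) :
    f = g := by
  cases f; cases g; cases hV; cases hE; rfl

instance (Γ : MGraph) : Group (Aut Γ) where
  one := ⟨Equiv.refl _, Equiv.refl _, fun _ => rfl, fun _ => rfl⟩
  mul g h := ⟨h.onV.trans g.onV, h.onE.trans g.onE,
    fun e => by simp only [Equiv.trans_apply]; rw [g.map_ι, h.map_ι],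
    fun e => by simp only [Equiv.trans_apply]; rw [g.map_τ, h.map_τ]⟩
  inv g := ⟨g.onV.symm, g.onE.symm,
    fun e => by
      have h := g.map_ι (g.onE.symm e)
      rw [Equiv.apply_symm_apply] at h
      rw [h, Equiv.symm_apply_apply],
    fun e => by
      have h := g.map_τ (g.onE.symm e)
      rw [Equiv.apply_symm_apply] at h
      rw [h, Equiv.symm_apply_apply]⟩
  mul_assoc a b c := Iso.ext' (Equiv.ext fun _ => rfl) (Equiv.ext fun _ => rfl)
  one_mul a := Iso.ext' (Equiv.ext fun _ => rfl) (Equiv.ext fun _ => rfl)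
  mul_one a := Iso.ext' (Equiv.ext fun _ => rfl) (Equiv.ext fun _ => rfl)
  inv_mul_cancel a :=
    Iso.ext' (Equiv.ext fun x => a.onV.symm_apply_apply x)
      (Equiv.ext fun x => a.onE.symm_apply_apply x)

theorem Aut.mul_onV {Γ : MGraph} (g h : Aut Γ) (v : Γ.V) : (g * h).onV v = g.onV (h.onV v) := rfl
theorem Aut.mul_onE {Γ : MGraph} (g h : Aut Γ) (e : Γ.E) : (g * h).onE e = g.onE (h.onE e) := rfl
theorem Aut.one_onV {Γ : MGraph} (v : Γ.V) : (1 : Aut Γ).onV v = v := rfl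
theorem Aut.inv_onV {Γ : MGraph} (g : Aut Γ) (v : Γ.V) : g⁻¹.onV v = g.onV.symm v := rfl

/-- The outset of a vertex. -/
def Out (Γ : MGraph) (v : Γ.V) : Set Γ.E := {e | Γ.ι e = v}

/-- The inset of a vertex. -/
def In (Γ : MGraph) (v : Γ.V) : Set Γ.E := {e | Γ.τ e = v}

/-- A covering: a surjective homomorphism restricting to bijections on out-sets and in-sets. -/
structure IsCovering {Γ Δ : MGraph} (φ : Hom Γ Δ) : Prop where
  surjV : Function.Surjective φ.onV
  surjE : Function.Surjective φ.onE
  bijOut : ∀ v : Γ.V, Set.BijOn φ.onE (Out Γ v) (Out Δ (φ.onV v))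
  bijIn : ∀ v : Γ.V, Set.BijOn φ.onE (In Γ v) (In Δ (φ.onV v))

/-- The cover group of a covering: automorphisms `g` of `Γ` with `φ ∘ g = φ`. -/
def coverGroup {Γ Δ : MGraph} (φ : Hom Γ Δ) : Subgroup (Aut Γ) where
  carrier := {g | (∀ v, φ.onV (g.onV v) = φ.onV v) ∧ (∀ e, φ.onE (g.onE e) = φ.onE e)}
  one_mem' := ⟨fun _ => rfl, fun _ => rfl⟩
  mul_mem' := by
    rintro g h ⟨hgV, hgE⟩ ⟨hhV, hhE⟩
    exact ⟨fun v => by rw [Aut.mul_onV, hgV, hhV], fun e => by rw [Aut.mul_onE, hgE, hhE]⟩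
  inv_mem' := by
    rintro g ⟨hgV, hgE⟩
    refine ⟨fun v => ?_, fun e => ?_⟩
    · have h := hgV (g.onV.symm v)
      rw [Equiv.apply_symm_apply] at h
      exact h.symm
    · have h := hgE (g.onE.symm e)
      rw [Equiv.apply_symm_apply] at h
      exact h.symm

theorem mem_coverGroup {Γ Δ : MGraph} {φ : Hom Γ Δ} {g : Aut Γ} :
    g ∈ coverGroup φ ↔ (∀ v, φ.onV (g.onV v) = φ.onV v) ∧ (∀ e, φ.onE (g.onE e) = φ.onE e) :=
  Iff.rfl

/-- A covering is regular if its cover group acts transitively on all fibers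
(of vertices and of edges). -/
def IsRegular {Γ Δ : MGraph} (φ : Hom Γ Δ) : Prop :=
  (∀ v w : Γ.V, φ.onV v = φ.onV w → ∃ g ∈ coverGroup φ, g.onV v = w) ∧
  (∀ e f : Γ.E, φ.onE e = φ.onE f → ∃ g ∈ coverGroup φ, g.onE e = f)

/-- The orbit equivalence on vertices induced by a subgroup of automorphisms. -/
def vSetoid (Γ : MGraph) (G : Subgroup (Aut Γ)) : Setoid Γ.V where
  r v w := ∃ g ∈ G, g.onV v = w
  iseqv := by
    refine ⟨fun v => ⟨1, one_mem _, rfl⟩, ?_, ?_⟩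
    · rintro v w ⟨g, hg, rfl⟩
      exact ⟨g⁻¹, inv_mem hg, g.onV.symm_apply_apply v⟩
    · rintro u v w ⟨g, hg, rfl⟩ ⟨h, hh, rfl⟩
      exact ⟨h * g, mul_mem hh hg, rfl⟩

/-- The orbit equivalence on edges induced by a subgroup of automorphisms. -/
def eSetoid (Γ : MGraph) (G : Subgroup (Aut Γ)) : Setoid Γ.E where
  r e f := ∃ g ∈ G, g.onE e = f
  iseqv := by
    refine ⟨fun e => ⟨1, one_mem _, rfl⟩, ?_, ?_⟩
    · rintro e f ⟨g, hg, rfl⟩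
      exact ⟨g⁻¹, inv_mem hg, g.onE.symm_apply_apply e⟩
    · rintro e f d ⟨g, hg, rfl⟩ ⟨h, hh, rfl⟩
      exact ⟨h * g, mul_mem hh hg, rfl⟩

/-- The quotient graph of `Γ` by a subgroup `G` of automorphisms. -/
def quotientGraph (Γ : MGraph) (G : Subgroup (Aut Γ)) : MGraph where
  V := Quotient (vSetoid Γ G)
  E := Quotient (eSetoid Γ G)
  ι := Quotient.map' Γ.ι (by rintro e f ⟨g, hg, rfl⟩; exact ⟨g, hg, (g.map_ι e).symm⟩)
  τ := Quotient.map' Γ.τ (by rintro e f ⟨g, hg, rfl⟩; exact ⟨g, hg, (g.map_τ e).symm⟩)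

/-- The canonical projection of a graph onto its quotient by a subgroup of automorphisms. -/
def quotientProj (Γ : MGraph) (G : Subgroup (Aut Γ)) : Hom Γ (quotientGraph Γ G) where
  onV := Quotient.mk (vSetoid Γ G)
  onE := Quotient.mk (eSetoid Γ G)
  map_ι e := rfl
  map_τ e := rfl

/-- A subgroup of automorphisms acts freely: nonidentity elements move every vertex. -/
def ActsFreely (Γ : MGraph) (G : Subgroup (Aut Γ)) : Prop :=
  ∀ g ∈ G, g ≠ 1 → ∀ v : Γ.V, g.onV v ≠ v

/-! ### Walks -/

/-- The vertex from which a step (edge together with a direction of traversal) departs. -/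
def stepSrc (Γ : MGraph) (s : Γ.E × Bool) : Γ.V := cond s.2 (Γ.ι s.1) (Γ.τ s.1)

/-- The vertex at which a step arrives. -/
def stepTgt (Γ : MGraph) (s : Γ.E × Bool) : Γ.V := cond s.2 (Γ.τ s.1) (Γ.ι s.1)

/-- A list of steps forms a chain starting at a given vertex. -/
def chain (Γ : MGraph) : Γ.V → List (Γ.E × Bool) → Prop
  | _, [] => True
  | v, s :: rest => stepSrc Γ s = v ∧ chain Γ (stepTgt Γ s) rest

/-- The final vertex after traversing a list of steps from a given vertex. -/
def endOf (Γ : MGraph) : Γ.V → List (Γ.E × Bool) → Γ.V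
  | v, [] => v
  | _, s :: rest => endOf Γ (stepTgt Γ s) rest

/-- A walk: an initial vertex and a compatible list of steps, each traversing an
edge either along (`true`) or against (`false`) its orientation. -/
structure Walk (Γ : MGraph) where
  first : Γ.V
  steps : List (Γ.E × Bool)
  ok : chain Γ first steps

/-- The terminal vertex of a walk. -/
def Walk.last {Γ : MGraph} (w : Walk Γ) : Γ.V := endOf Γ w.first w.steps

/-- Two vertices joined by a walk. -/
def Reachable (Γ : MGraph) (u v : Γ.V) : Prop :=
  ∃ w : Walk Γ, w.first = u ∧ w.last = v

/-- A graph is connected if any two vertices are joined by a walk. -/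
def Connected (Γ : MGraph) : Prop :=
  ∀ u v : Γ.V, Reachable Γ u v

def Hom.mapStep {Γ Δ : MGraph} (φ : Hom Γ Δ) (s : Γ.E × Bool) : Δ.E × Bool := (φ.onE s.1, s.2)

theorem Hom.stepSrc_map {Γ Δ : MGraph} (φ : Hom Γ Δ) (s : Γ.E × Bool) :
    stepSrc Δ (φ.mapStep s) = φ.onV (stepSrc Γ s) := by
  obtain ⟨e, b⟩ := s
  cases b <;> simp [stepSrc, Hom.mapStep, φ.map_ι, φ.map_τ]

theorem Hom.stepTgt_map {Γ Δ : MGraph} (φ : Hom Γ Δ) (s : Γ.E × Bool) :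
    stepTgt Δ (φ.mapStep s) = φ.onV (stepTgt Γ s) := by
  obtain ⟨e, b⟩ := s
  cases b <;> simp [stepTgt, Hom.mapStep, φ.map_ι, φ.map_τ]

theorem Hom.chain_map {Γ Δ : MGraph} (φ : Hom Γ Δ) (l : List (Γ.E × Bool)) (v : Γ.V)
    (h : chain Γ v l) : chain Δ (φ.onV v) (l.map φ.mapStep) := by
  induction l generalizing v with
  | nil => trivial
  | cons s rest ih =>
    exact ⟨by rw [φ.stepSrc_map, h.1], by rw [φ.stepTgt_map]; exact ih _ h.2⟩

/-- The image of a walk under a homomorphism (edge-by-edge, preserving directions). -/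
def Walk.map {Γ Δ : MGraph} (φ : Hom Γ Δ) (w : Walk Γ) : Walk Δ :=
  ⟨φ.onV w.first, w.steps.map φ.mapStep, φ.chain_map w.steps w.first w.ok⟩

theorem endOf_map {Γ Δ : MGraph} (φ : Hom Γ Δ) (l : List (Γ.E × Bool)) (v : Γ.V) :
    endOf Δ (φ.onV v) (l.map φ.mapStep) = φ.onV (endOf Γ v l) := by
  induction l generalizing v with
  | nil => rfl
  | cons s rest ih =>
    show endOf Δ (stepTgt Δ (φ.mapStep s)) (rest.map φ.mapStep) = _
    rw [φ.stepTgt_map]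
    exact ih _

theorem chain_append (Γ : MGraph) (l₁ l₂ : List (Γ.E × Bool)) (v : Γ.V)
    (h₁ : chain Γ v l₁) (h₂ : chain Γ (endOf Γ v l₁) l₂) : chain Γ v (l₁ ++ l₂) := by
  induction l₁ generalizing v with
  | nil => exact h₂
  | cons s rest ih => exact ⟨h₁.1, ih _ h₁.2 h₂⟩

theorem endOf_append (Γ : MGraph) (l₁ l₂ : List (Γ.E × Bool)) (v : Γ.V) :
    endOf Γ v (l₁ ++ l₂) = endOf Γ (endOf Γ v l₁) l₂ := by
  induction l₁ generalizing v with
  | nil => rfl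
  | cons s rest ih => exact ih _

/-- Concatenation of walks. -/
def Walk.append {Γ : MGraph} (w₁ w₂ : Walk Γ) (h : w₁.last = w₂.first) : Walk Γ :=
  ⟨w₁.first, w₁.steps ++ w₂.steps, chain_append Γ _ _ _ w₁.ok (by rw [show endOf Γ w₁.first w₁.steps = w₂.first from h]; exact w₂.ok)⟩

theorem Walk.append_last {Γ : MGraph} (w₁ w₂ : Walk Γ) (h : w₁.last = w₂.first) :
    (w₁.append w₂ h).last = w₂.last := by
  show endOf Γ w₁.first (w₁.steps ++ w₂.steps) = _
  rw [endOf_append, show endOf Γ w₁.first w₁.steps = w₂.first from h]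
  rfl

theorem Reachable.trans {Γ : MGraph} {u v w : Γ.V}
    (h₁ : Reachable Γ u v) (h₂ : Reachable Γ v w) : Reachable Γ u w := by
  obtain ⟨p, hp1, hp2⟩ := h₁
  obtain ⟨q, hq1, hq2⟩ := h₂
  exact ⟨p.append q (by rw [hp2, hq1]), hp1, by rw [Walk.append_last]; exact hq2⟩

/-- A single forward step along an edge, as a walk. -/
def Walk.single {Γ : MGraph} (e : Γ.E) : Walk Γ :=
  ⟨Γ.ι e, [(e, true)], ⟨rfl, trivial⟩⟩

def flipStep {Γ : MGraph} (s : Γ.E × Bool) : Γ.E × Bool := (s.1, !s.2)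

theorem stepSrc_flip (Γ : MGraph) (s : Γ.E × Bool) : stepSrc Γ (flipStep s) = stepTgt Γ s := by
  obtain ⟨e, b⟩ := s; cases b <;> rfl

theorem stepTgt_flip (Γ : MGraph) (s : Γ.E × Bool) : stepTgt Γ (flipStep s) = stepSrc Γ s := by
  obtain ⟨e, b⟩ := s; cases b <;> rfl

theorem endOf_reverse (Γ : MGraph) (l : List (Γ.E × Bool)) (v : Γ.V) (h : chain Γ v l) :
    endOf Γ (endOf Γ v l) (l.reverse.map flipStep) = v := by
  induction l generalizing v with
  | nil => rfl
  | cons s rest ih =>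
    rw [List.reverse_cons, List.map_append]
    show endOf Γ (endOf Γ (stepTgt Γ s) rest) ((rest.reverse.map flipStep) ++ [flipStep s]) = v
    rw [endOf_append, ih _ h.2]
    show stepTgt Γ (flipStep s) = v
    rw [stepTgt_flip]; exact h.1

theorem chain_reverse (Γ : MGraph) (l : List (Γ.E × Bool)) (v : Γ.V) (h : chain Γ v l) :
    chain Γ (endOf Γ v l) (l.reverse.map flipStep) := by
  induction l generalizing v with
  | nil => trivial
  | cons s rest ih =>
    rw [List.reverse_cons, List.map_append]
    show chain Γ (endOf Γ (stepTgt Γ s) rest) _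
    refine chain_append Γ _ _ _ (ih _ h.2) ?_
    rw [endOf_reverse Γ rest _ h.2]
    exact ⟨by rw [stepSrc_flip], trivial⟩

/-- The reversal of a walk. -/
def Walk.reverse {Γ : MGraph} (w : Walk Γ) : Walk Γ :=
  ⟨w.last, w.steps.reverse.map flipStep, chain_reverse Γ w.steps w.first w.ok⟩

theorem Walk.reverse_last {Γ : MGraph} (w : Walk Γ) : w.reverse.last = w.first :=
  endOf_reverse Γ w.steps w.first w.ok

theorem Reachable.refl' (Γ : MGraph) (v : Γ.V) : Reachable Γ v v :=
  ⟨⟨v, [], trivial⟩, rfl, rfl⟩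

theorem Reachable.symm' {Γ : MGraph} {u v : Γ.V} (h : Reachable Γ u v) : Reachable Γ v u := by
  obtain ⟨p, h1, h2⟩ := h
  exact ⟨p.reverse, by rw [show p.reverse.first = p.last from rfl, h2],
    by rw [p.reverse_last, h1]⟩

/-- The connected-component equivalence on vertices. -/
def reachSetoid (Γ : MGraph) : Setoid Γ.V where
  r := Reachable Γ
  iseqv := ⟨Reachable.refl' Γ, Reachable.symm', Reachable.trans⟩

/-! ### Subgraphs, trees, lifts -/

/-- A subgraph of a graph. -/
structure Subgraph (Γ : MGraph) where
  verts : Set Γ.V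
  edges : Set Γ.E
  ι_mem : ∀ e ∈ edges, Γ.ι e ∈ verts
  τ_mem : ∀ e ∈ edges, Γ.τ e ∈ verts

/-- The graph determined by a subgraph. -/
def Subgraph.toMGraph {Γ : MGraph} (H : Subgraph Γ) : MGraph where
  V := ↥H.verts
  E := ↥H.edges
  ι e := ⟨Γ.ι e.1, H.ι_mem e.1 e.2⟩
  τ e := ⟨Γ.τ e.1, H.τ_mem e.1 e.2⟩

/-- The inclusion homomorphism of a subgraph. -/
def Subgraph.incl {Γ : MGraph} (H : Subgraph Γ) : Hom H.toMGraph Γ :=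
  ⟨fun v => v.1, fun e => e.1, fun _ => rfl, fun _ => rfl⟩

/-- The set of endpoints of a set of edges. -/
def endpoints (Γ : MGraph) (S : Set Γ.E) : Set Γ.V := {v | ∃ e ∈ S, Γ.ι e = v ∨ Γ.τ e = v}

/-- The subgraph induced by a set of edges. -/
def edgeInduced (Γ : MGraph) (S : Set Γ.E) : Subgraph Γ where
  verts := endpoints Γ S
  edges := S
  ι_mem e he := ⟨e, he, Or.inl rfl⟩
  τ_mem e he := ⟨e, he, Or.inr rfl⟩

/-- The list of vertices visited when traversing a list of steps from a vertex. -/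
def vertsOf (Γ : MGraph) : Γ.V → List (Γ.E × Bool) → List Γ.V
  | v, [] => [v]
  | v, s :: rest => v :: vertsOf Γ (stepTgt Γ s) rest

/-- A path: a walk with no repeated edge and no repeated vertex
(except possibly the initial and terminal vertex coinciding). -/
def Walk.IsPath {Γ : MGraph} (w : Walk Γ) : Prop :=
  (w.steps.map Prod.fst).Nodup ∧
  (vertsOf Γ w.first w.steps).dropLast.Nodup ∧
  (vertsOf Γ w.first w.steps).tail.Nodup

/-- A cyclic walk: terminal vertex equals initial vertex. -/
def Walk.IsCyclic {Γ : MGraph} (w : Walk Γ) : Prop := w.last = w.first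

/-- A graph is acyclic if it has no nontrivial cyclic path. -/
def Acyclic (Γ : MGraph) : Prop :=
  ¬ ∃ w : Walk Γ, w.steps ≠ [] ∧ w.IsCyclic ∧ w.IsPath

/-- A spanning tree set: an edge set inducing an acyclic connected subgraph
containing all vertices. -/
def IsSpanningTreeSet (Δ : MGraph) (S : Set Δ.E) : Prop :=
  Acyclic (edgeInduced Δ S).toMGraph ∧ Connected (edgeInduced Δ S).toMGraph ∧
  ∀ v : Δ.V, v ∈ endpoints Δ S

/-- A lift of `Δ` with respect to a covering `φ : Γ → Δ`: a connected subgraph of `Γ`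
on whose edges `φ` restricts to a bijection onto the edges of `Δ`. -/
def IsLift {Γ Δ : MGraph} (φ : Hom Γ Δ) (Λ : Subgraph Γ) : Prop :=
  Connected Λ.toMGraph ∧ Set.BijOn φ.onE Λ.edges Set.univ

/-- A proper lift, with designated edge set `S₀` lifting a spanning tree set of `Δ`:
every edge of the lift has its initial endpoint among the endpoints of `S₀`
(the interior vertices). -/
def IsProperLiftWith {Γ Δ : MGraph} (φ : Hom Γ Δ) (Λ : Subgraph Γ) (S₀ : Set Γ.E) : Prop :=
  IsLift φ Λ ∧ S₀ ⊆ Λ.edges ∧ IsSpanningTreeSet Δ (φ.onE '' S₀) ∧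
  ∀ e ∈ Λ.edges, Γ.ι e ∈ endpoints Γ S₀

/-- A proper lift. -/
def IsProperLift {Γ Δ : MGraph} (φ : Hom Γ Δ) (Λ : Subgraph Γ) : Prop :=
  ∃ S₀ : Set Γ.E, IsProperLiftWith φ Λ S₀

/-! ### Voltage graphs -/

/-- The voltage of a walk: the ordered product of the voltages of its edges,
inverted when an edge is traversed against its orientation. -/
def voltage {Δ : MGraph} {G : Type} [Group G] (γ : Δ.E → G) (w : Walk Δ) : G :=
  (w.steps.map fun s => cond s.2 (γ s.1) (γ s.1)⁻¹).prod

/-- The derived graph of a voltage graph `(Δ, γ)`. -/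
def derivedGraph (Δ : MGraph) {G : Type} [Group G] (γ : Δ.E → G) : MGraph where
  V := Δ.V × G
  E := Δ.E × G
  ι e := (Δ.ι e.1, e.2)
  τ e := (Δ.τ e.1, e.2 * γ e.1)

/-- The canonical covering of a derived graph onto its base. -/
def derivedProj (Δ : MGraph) {G : Type} [Group G] (γ : Δ.E → G) : Hom (derivedGraph Δ γ) Δ :=
  ⟨Prod.fst, Prod.fst, fun _ => rfl, fun _ => rfl⟩

/-- Restriction of a voltage assignment to the subgroup generated by its values. -/
def restrictToClosure {G : Type} [Group G] {α : Type} (γ : α → G) :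
    α → Subgroup.closure (Set.range γ) :=
  fun a => ⟨γ a, Subgroup.subset_closure (Set.mem_range_self a)⟩

/-- The connected component of a vertex, as a subgraph. -/
def componentOf (Γ : MGraph) (v : Γ.V) : Subgraph Γ where
  verts := {u | Reachable Γ v u}
  edges := {e | Reachable Γ v (Γ.ι e)}
  ι_mem e he := he
  τ_mem e he := Reachable.trans he ⟨Walk.single e, rfl, rfl⟩

/-- `γ'` is the condensation of `γ` with respect to the spanning tree set `S` and the base
vertex `v₀`: edges of `S` get the identity, and an edge `e ∉ S` gets the voltage of the
return walk of `e` from `v₀` via `S`. -/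
def IsCondensation {Δ : MGraph} {G : Type} [Group G] (γ : Δ.E → G) (S : Set Δ.E)
    (v₀ : Δ.V) (γ' : Δ.E → G) : Prop :=
  (∀ e ∈ S, γ' e = 1) ∧
  ∀ e ∉ S, ∃ p₁ p₂ : Walk Δ,
    p₁.first = v₀ ∧ p₁.last = Δ.ι e ∧ p₂.first = Δ.τ e ∧ p₂.last = v₀ ∧
    p₁.IsPath ∧ p₂.IsPath ∧
    (∀ s ∈ p₁.steps, s.1 ∈ S) ∧ (∀ s ∈ p₂.steps, s.1 ∈ S) ∧
    γ' e = voltage γ p₁ * γ e * voltage γ p₂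

/-- `γ` is the voltage assignment on `Δ` with respect to the proper lift `Λ` (with interior
determined by `S₀`): interior edges of the lift give voltage `1`, and a boundary edge with
terminal endpoint in `g · V_Λ⁰` gives voltage `g`. -/
def IsVoltageWrt {Γ Δ : MGraph} (φ : Hom Γ Δ) (Λ : Subgraph Γ) (S₀ : Set Γ.E)
    (γ : Δ.E → Aut Γ) : Prop :=
  (∀ eΔ : Δ.E, γ eΔ ∈ coverGroup φ) ∧
  ∀ e ∈ Λ.edges,
    (Γ.τ e ∈ endpoints Γ S₀ → γ (φ.onE e) = 1) ∧
    (Γ.τ e ∉ endpoints Γ S₀ → Γ.τ e ∈ (γ (φ.onE e)).onV '' endpoints Γ S₀)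

/-- A good covering of a voltage graph: every cyclic walk of trivial voltage lifts
only to cyclic walks. -/
def IsGoodCovering {Δ Δtop : MGraph} {G : Type} [Group G] (γ : Δ.E → G)
    (μ : Hom Δtop Δ) : Prop :=
  ∀ p : Walk Δ, p.IsCyclic → voltage γ p = 1 →
    ∀ q : Walk Δtop, Walk.map μ q = p → q.IsCyclic

/-! ### Product graphs and common covers -/

/-- The product of two graphs. -/
def prodGraph (Δ₁ Δ₂ : MGraph) : MGraph where
  V := Δ₁.V × Δ₂.V
  E := Δ₁.E × Δ₂.E
  ι e := (Δ₁.ι e.1, Δ₂.ι e.2)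
  τ e := (Δ₁.τ e.1, Δ₂.τ e.2)

/-- First coordinate projection from a subgraph of a product graph. -/
def sgProj₁ {Δ₁ Δ₂ : MGraph} (H : Subgraph (prodGraph Δ₁ Δ₂)) : Hom H.toMGraph Δ₁ where
  onV v := (v.1 : Δ₁.V × Δ₂.V).1
  onE e := (e.1 : Δ₁.E × Δ₂.E).1
  map_ι e := rfl
  map_τ e := rfl

/-- Second coordinate projection from a subgraph of a product graph. -/
def sgProj₂ {Δ₁ Δ₂ : MGraph} (H : Subgraph (prodGraph Δ₁ Δ₂)) : Hom H.toMGraph Δ₂ where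
  onV v := (v.1 : Δ₁.V × Δ₂.V).2
  onE e := (e.1 : Δ₁.E × Δ₂.E).2
  map_ι e := rfl
  map_τ e := rfl

/-- A good common cover of two voltage graphs: a connected subgraph of the product graph
whose coordinate projections are coverings, each a good covering of the respective
voltage graph. -/
def IsGoodCommonCover {Δ₁ Δ₂ : MGraph} {K₁ K₂ : Type} [Group K₁] [Group K₂]
    (γ₁ : Δ₁.E → K₁) (γ₂ : Δ₂.E → K₂) (H : Subgraph (prodGraph Δ₁ Δ₂)) : Prop :=
  Connected H.toMGraph ∧
  IsCovering (sgProj₁ H) ∧ IsCovering (sgProj₂ H) ∧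
  IsGoodCovering γ₁ (sgProj₁ H) ∧ IsGoodCovering γ₂ (sgProj₂ H)

/-- A successful good common cover: both projections are regular, and there is an
automorphism `α` of the cover fixing a spanning tree set `S_⊤` such that the
correspondence between the condensed lifted voltages (via `α`) extends to a group
isomorphism of the generated voltage groups. -/
def IsSuccessfulGoodCommonCover {Δ₁ Δ₂ : MGraph} {K₁ K₂ : Type} [Group K₁] [Group K₂]
    (γ₁ : Δ₁.E → K₁) (γ₂ : Δ₂.E → K₂) (H : Subgraph (prodGraph Δ₁ Δ₂)) : Prop :=
  IsGoodCommonCover γ₁ γ₂ H ∧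
  IsRegular (sgProj₁ H) ∧ IsRegular (sgProj₂ H) ∧
  ∃ (Stop : Set H.toMGraph.E) (vtop : H.toMGraph.V)
    (γ₁' : H.toMGraph.E → K₁) (γ₂' : H.toMGraph.E → K₂) (α : Aut H.toMGraph),
    IsSpanningTreeSet H.toMGraph Stop ∧
    IsCondensation (fun e => γ₁ ((sgProj₁ H).onE e)) Stop vtop γ₁' ∧
    IsCondensation (fun e => γ₂ ((sgProj₂ H).onE e)) Stop vtop γ₂' ∧
    (∀ e ∈ Stop, α.onE e = e) ∧
    ∃ F : ↥(Subgroup.closure (Set.range γ₁')) ≃* ↥(Subgroup.closure (Set.range γ₂')),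
      ∀ e : H.toMGraph.E, (F (restrictToClosure γ₁' e) : K₂) = γ₂' (α.onE e)

/-- A good common cover with regular projections fails if it is not successful. -/
def FailsAsCommonCover {Δ₁ Δ₂ : MGraph} {K₁ K₂ : Type} [Group K₁] [Group K₂]
    (γ₁ : Δ₁.E → K₁) (γ₂ : Δ₂.E → K₂) (H : Subgraph (prodGraph Δ₁ Δ₂)) : Prop :=
  IsGoodCommonCover γ₁ γ₂ H ∧
  IsRegular (sgProj₁ H) ∧ IsRegular (sgProj₂ H) ∧
  ¬ IsSuccessfulGoodCommonCover γ₁ γ₂ H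


/-! If `ν` exists, every lift to `Δ_⊤` of a walk in `Δ` is the `ν`-image of a lift to the derived
graph, and there the group coordinate of the endpoint of a lift is the initial one multiplied by
the voltage, so lifts of cyclic walks of trivial voltage close up.

Conversely, let `μ` be good. Two walks in `Γ` from `v₀` to the same vertex project to walks with
the same endpoints and the same voltage, so the projection of the first followed by the reverse of
the second is a cyclic walk of trivial voltage; its lift from `v_⊤` is cyclic, which forces the
lifts of the two projections to end at the same vertex. Hence path lifting defines `ν`. It is
locally bijective since `μ ∘ ν = φ` with `μ` and `φ` locally bijective, and surjective since
`Δ_⊤` is connected. -/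

theorem _root_.Set.BijOn.of_comp {α β δ : Type*} {f : α → β} {g : β → δ} {s : Set α}
    {t : Set β} {p : Set δ} (h : Set.BijOn (g ∘ f) s p) (hg : Set.BijOn g t p)
    (hf : Set.MapsTo f s t) : Set.BijOn f s t := by
  refine ⟨hf, h.injOn.of_comp, fun y hy => ?_⟩
  obtain ⟨x, hx, hxy⟩ := h.surjOn (hg.mapsTo hy)
  exact ⟨x, hx, hg.injOn (hf hx) hy hxy⟩

theorem Hom.ext {Γ Δ : MGraph} {f g : Hom Γ Δ} (hV : f.onV = g.onV) (hE : f.onE = g.onE) :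
    f = g := by
  cases f; cases g; cases hV; cases hE; rfl

theorem Walk.ext {Γ : MGraph} {w₁ w₂ : Walk Γ} (h₁ : w₁.first = w₂.first)
    (h₂ : w₁.steps = w₂.steps) : w₁ = w₂ := by
  cases w₁; cases w₂; cases h₁; cases h₂; rfl

theorem map_mapStep_reverse {Γ Δ : MGraph} (φ : Hom Γ Δ) (l : List (Γ.E × Bool)) :
    (l.reverse.map flipStep).map φ.mapStep = (l.map φ.mapStep).reverse.map flipStep := by
  simp only [List.map_reverse, List.map_map]
  rfl

theorem reverse_map_flipStep_involutive {Γ : MGraph} (l : List (Γ.E × Bool)) :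
    (l.reverse.map flipStep).reverse.map flipStep = l := by
  have hflip : (flipStep ∘ flipStep : Γ.E × Bool → Γ.E × Bool) = id :=
    funext fun s => by simp [flipStep]
  rw [List.map_reverse, List.map_map, hflip, List.map_id, List.reverse_reverse]

structure IsLocallyBijective {Γ Δ : MGraph} (φ : Hom Γ Δ) : Prop where
  bijOut : ∀ v : Γ.V, Set.BijOn φ.onE (Out Γ v) (Out Δ (φ.onV v))
  bijIn : ∀ v : Γ.V, Set.BijOn φ.onE (In Γ v) (In Δ (φ.onV v))

theorem IsCovering.isLocallyBijective {Γ Δ : MGraph} {φ : Hom Γ Δ} (h : IsCovering φ) :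
    IsLocallyBijective φ :=
  ⟨h.bijOut, h.bijIn⟩

namespace IsLocallyBijective

variable {Γ Δ : MGraph} {φ : Hom Γ Δ}

theorem exists_step_lift (hφ : IsLocallyBijective φ) {v : Γ.V} {s : Δ.E × Bool}
    (hs : stepSrc Δ s = φ.onV v) : ∃ t, stepSrc Γ t = v ∧ φ.mapStep t = s := by
  obtain ⟨e, _ | _⟩ := s
  · obtain ⟨e', he', rfl⟩ := (hφ.bijIn v).surjOn (show e ∈ In Δ (φ.onV v) from hs)
    exact ⟨(e', false), he', rfl⟩
  · obtain ⟨e', he', rfl⟩ := (hφ.bijOut v).surjOn (show e ∈ Out Δ (φ.onV v) from hs)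
    exact ⟨(e', true), he', rfl⟩

theorem step_lift_unique (hφ : IsLocallyBijective φ) {v : Γ.V} {t₁ t₂ : Γ.E × Bool}
    (h₁ : stepSrc Γ t₁ = v) (h₂ : stepSrc Γ t₂ = v) (h : φ.mapStep t₁ = φ.mapStep t₂) :
    t₁ = t₂ := by
  obtain ⟨e₁, b⟩ := t₁
  obtain ⟨e₂, b'⟩ := t₂
  obtain ⟨he, rfl : b = b'⟩ := Prod.mk.inj h
  cases b
  · obtain rfl : e₁ = e₂ := (hφ.bijIn v).injOn h₁ h₂ he
    rfl
  · obtain rfl : e₁ = e₂ := (hφ.bijOut v).injOn h₁ h₂ he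
    rfl

theorem exists_lift (hφ : IsLocallyBijective φ) {v : Γ.V} {l : List (Δ.E × Bool)}
    (hl : chain Δ (φ.onV v) l) : ∃ m, chain Γ v m ∧ m.map φ.mapStep = l := by
  induction l generalizing v with
  | nil => exact ⟨[], trivial, rfl⟩
  | cons s rest ih =>
    obtain ⟨t, hts, rfl⟩ := hφ.exists_step_lift hl.1
    obtain ⟨m, hm, hmap⟩ := ih (v := stepTgt Γ t) (by rw [← φ.stepTgt_map]; exact hl.2)
    exact ⟨t :: m, ⟨hts, hm⟩, by rw [List.map_cons, hmap]⟩

theorem lift_unique (hφ : IsLocallyBijective φ) {v : Γ.V} {m₁ m₂ : List (Γ.E × Bool)}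
    (h₁ : chain Γ v m₁) (h₂ : chain Γ v m₂) (h : m₁.map φ.mapStep = m₂.map φ.mapStep) :
    m₁ = m₂ := by
  induction m₁ generalizing v m₂ with
  | nil => exact (List.map_eq_nil_iff.mp h.symm).symm
  | cons t rest ih =>
    cases m₂ with
    | nil => simp at h
    | cons t' rest' =>
      rw [List.map_cons, List.map_cons, List.cons.injEq] at h
      obtain rfl := hφ.step_lift_unique h₁.1 h₂.1 h.1
      rw [ih h₁.2 h₂.2 h.2]

theorem of_comp {Δtop : MGraph} {μ : Hom Δtop Δ} {ψ : Hom Γ Δtop} (hμ : IsLocallyBijective μ)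
    (hφ : IsLocallyBijective (μ.comp ψ)) : IsLocallyBijective ψ where
  bijOut v := (hφ.bijOut v).of_comp (f := ψ.onE) (g := μ.onE) (hμ.bijOut (ψ.onV v))
    fun e (he : Γ.ι e = v) => show Δtop.ι (ψ.onE e) = ψ.onV v by rw [ψ.map_ι, he]
  bijIn v := (hφ.bijIn v).of_comp (f := ψ.onE) (g := μ.onE) (hμ.bijIn (ψ.onV v))
    fun e (he : Γ.τ e = v) => show Δtop.τ (ψ.onE e) = ψ.onV v by rw [ψ.map_τ, he]

theorem isCovering_of_connected (hφ : IsLocallyBijective φ) (hΔ : Connected Δ) (v : Γ.V) :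
    IsCovering φ := by
  have surjV : Function.Surjective φ.onV := by
    intro w
    obtain ⟨r, hr₁, hr₂⟩ := hΔ (φ.onV v) w
    obtain ⟨m, -, hmap⟩ := hφ.exists_lift (v := v) (hr₁ ▸ r.ok)
    exact ⟨endOf Γ v m, by rw [← endOf_map, hmap, ← hr₁]; exact hr₂⟩
  refine ⟨surjV, fun e => ?_, hφ.bijOut, hφ.bijIn⟩
  obtain ⟨u, hu⟩ := surjV (Δ.ι e)
  obtain ⟨ε, -, hε⟩ := (hφ.bijOut u).surjOn (show e ∈ Out Δ (φ.onV u) from hu.symm)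
  exact ⟨ε, hε⟩

end IsLocallyBijective

def stepsVoltage {Δ : MGraph} {G : Type} [Group G] (γ : Δ.E → G) (l : List (Δ.E × Bool)) : G :=
  (l.map fun s => cond s.2 (γ s.1) (γ s.1)⁻¹).prod

section Voltage

variable {Δ : MGraph} {G : Type} [Group G] (γ : Δ.E → G)

theorem voltage_eq_stepsVoltage (w : Walk Δ) : voltage γ w = stepsVoltage γ w.steps := rfl

theorem stepsVoltage_cons (s : Δ.E × Bool) (l : List (Δ.E × Bool)) :
    stepsVoltage γ (s :: l) = cond s.2 (γ s.1) (γ s.1)⁻¹ * stepsVoltage γ l :=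
  List.prod_cons

theorem stepsVoltage_append (l₁ l₂ : List (Δ.E × Bool)) :
    stepsVoltage γ (l₁ ++ l₂) = stepsVoltage γ l₁ * stepsVoltage γ l₂ := by
  simp [stepsVoltage]

theorem stepsVoltage_reverse (l : List (Δ.E × Bool)) :
    stepsVoltage γ (l.reverse.map flipStep) = (stepsVoltage γ l)⁻¹ := by
  induction l with
  | nil => simp [stepsVoltage]
  | cons s l ih =>
    obtain ⟨e, _ | _⟩ := s <;>
      simp_all [stepsVoltage, flipStep]

end Voltage

theorem IsGoodCovering.endOf_lift_eq {Δ Δtop : MGraph} {G : Type} [Group G] {γ : Δ.E → G}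
    {μ : Hom Δtop Δ} (hgood : IsGoodCovering γ μ) (hμ : IsLocallyBijective μ) {w : Δtop.V}
    {m₁ m₂ : List (Δtop.E × Bool)} (hm₁ : chain Δtop w m₁) (hm₂ : chain Δtop w m₂)
    (hend : μ.onV (endOf Δtop w m₁) = μ.onV (endOf Δtop w m₂))
    (hvolt : stepsVoltage γ (m₁.map μ.mapStep) = stepsVoltage γ (m₂.map μ.mapStep)) :
    endOf Δtop w m₁ = endOf Δtop w m₂ := by
  set l₁ := m₁.map μ.mapStep
  set l₂ := m₂.map μ.mapStep
  have hl₂ : chain Δ (μ.onV w) l₂ := μ.chain_map m₂ w hm₂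
  have hl_end : endOf Δ (μ.onV w) l₁ = endOf Δ (μ.onV w) l₂ := by
    rw [endOf_map, endOf_map, hend]
  have hl₂_rev : chain Δ (endOf Δ (μ.onV w) l₁) (l₂.reverse.map flipStep) :=
    hl_end ▸ chain_reverse Δ l₂ _ hl₂
  obtain ⟨m', hm', hm'map⟩ := hμ.exists_lift (v := endOf Δtop w m₁) (by rwa [← endOf_map])
  let p : Walk Δ := ⟨μ.onV w, l₁ ++ l₂.reverse.map flipStep,
    chain_append Δ _ _ _ (μ.chain_map m₁ w hm₁) hl₂_rev⟩
  have hp_cyclic : p.IsCyclic := by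
    change endOf Δ _ (l₁ ++ _) = _
    rw [endOf_append, hl_end, endOf_reverse Δ l₂ _ hl₂]
  have hp_voltage : voltage γ p = 1 := by
    rw [voltage_eq_stepsVoltage, stepsVoltage_append, stepsVoltage_reverse, hvolt,
      mul_inv_cancel]
  have hm'_end : endOf Δtop (endOf Δtop w m₁) m' = w := by
    have := hgood p hp_cyclic hp_voltage ⟨w, m₁ ++ m', chain_append Δtop _ _ _ hm₁ hm'⟩
      (Walk.ext rfl (show (m₁ ++ m').map μ.mapStep = _ by rw [List.map_append, hm'map]))
    rwa [Walk.IsCyclic, Walk.last, endOf_append] at this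
  -- reversing `m'` gives a lift of `l₂` from `w`, which must be `m₂`
  have hm'_rev := endOf_reverse Δtop m' _ hm'
  rw [hm'_end] at hm'_rev
  have hm₂_eq : m₂ = m'.reverse.map flipStep :=
    hμ.lift_unique hm₂ (hm'_end ▸ chain_reverse Δtop m' _ hm')
      (by rw [map_mapStep_reverse, hm'map, reverse_map_flipStep_involutive])
  rw [hm₂_eq, hm'_rev]

/-- The relation `w = ν v` of the paper's path-lifting construction, before knowing that it is
single-valued. -/
def PathLiftRel {Γ Δ Δtop : MGraph} (φ : Hom Γ Δ) (μ : Hom Δtop Δ) (v₀ : Γ.V) (vtop : Δtop.V)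
    (v : Γ.V) (w : Δtop.V) : Prop :=
  ∃ l m, chain Γ v₀ l ∧ endOf Γ v₀ l = v ∧
    chain Δtop vtop m ∧ m.map μ.mapStep = l.map φ.mapStep ∧ endOf Δtop vtop m = w

section PathLifting

variable {Γ Δ Δtop : MGraph} {φ : Hom Γ Δ} {μ : Hom Δtop Δ} {v₀ : Γ.V} {vtop : Δtop.V}

theorem PathLiftRel.base : PathLiftRel φ μ v₀ vtop v₀ vtop :=
  ⟨[], [], trivial, rfl, trivial, rfl, rfl⟩

theorem PathLiftRel.onV_eq (hv : μ.onV vtop = φ.onV v₀) {v : Γ.V} {w : Δtop.V}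
    (h : PathLiftRel φ μ v₀ vtop v w) : μ.onV w = φ.onV v := by
  obtain ⟨l, m, -, rfl, -, hmap, rfl⟩ := h
  rw [← endOf_map, hmap, hv, endOf_map]

theorem PathLiftRel.step {v : Γ.V} {w : Δtop.V} (h : PathLiftRel φ μ v₀ vtop v w)
    {s : Γ.E × Bool} {t : Δtop.E × Bool} (hs : stepSrc Γ s = v) (ht : stepSrc Δtop t = w)
    (hst : μ.mapStep t = φ.mapStep s) :
    PathLiftRel φ μ v₀ vtop (stepTgt Γ s) (stepTgt Δtop t) := by
  obtain ⟨l, m, hl, rfl, hm, hmap, rfl⟩ := h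
  refine ⟨l ++ [s], m ++ [t], chain_append _ _ _ _ hl ⟨hs, trivial⟩, ?_,
    chain_append _ _ _ _ hm ⟨ht, trivial⟩, ?_, ?_⟩
  · rw [endOf_append]; rfl
  · rw [List.map_append, List.map_append, hmap, List.map_singleton, List.map_singleton, hst]
  · rw [endOf_append]; rfl

theorem exists_pathLiftRel (hμ : IsLocallyBijective μ) (hΓ : Connected Γ)
    (hv : μ.onV vtop = φ.onV v₀) (v : Γ.V) : ∃ w, PathLiftRel φ μ v₀ vtop v w := by
  obtain ⟨q, rfl, rfl⟩ := hΓ v₀ v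
  obtain ⟨m, hm, hmap⟩ := hμ.exists_lift (v := vtop) (hv ▸ φ.chain_map q.steps q.first q.ok)
  exact ⟨_, q.steps, m, q.ok, rfl, hm, hmap, rfl⟩

theorem exists_hom_comp_eq_of_pathLiftRel_unique (hμ : IsLocallyBijective μ)
    (hΓ : Connected Γ) (hv : μ.onV vtop = φ.onV v₀)
    (hunique : ∀ {v w w'}, PathLiftRel φ μ v₀ vtop v w → PathLiftRel φ μ v₀ vtop v w' → w = w') :
    ∃ ψ : Hom Γ Δtop, μ.comp ψ = φ ∧ ψ.onV v₀ = vtop := by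
  choose ψV hψV using exists_pathLiftRel hμ hΓ hv
  have hproj (v : Γ.V) : μ.onV (ψV v) = φ.onV v := (hψV v).onV_eq hv
  have edge_lift (e : Γ.E) : ∃ e', Δtop.ι e' = ψV (Γ.ι e) ∧ μ.onE e' = φ.onE e :=
    (hμ.bijOut _).surjOn (show Δ.ι (φ.onE e) = μ.onV (ψV (Γ.ι e)) by rw [hproj, φ.map_ι])
  choose ψE hψι hψE using edge_lift
  have hψτ (e : Γ.E) : Δtop.τ (ψE e) = ψV (Γ.τ e) :=
    hunique ((hψV (Γ.ι e)).step (s := (e, true)) (t := (ψE e, true)) rfl (hψι e)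
      (by rw [Hom.mapStep, hψE]; rfl)) (hψV (Γ.τ e))
  exact ⟨⟨ψV, ψE, hψι, hψτ⟩, Hom.ext (funext hproj) (funext hψE), hunique (hψV v₀) .base⟩

end PathLifting

theorem derivedProj_isCovering (Δ : MGraph) {G : Type} [Group G] (γ : Δ.E → G) :
    IsCovering (derivedProj Δ γ) where
  surjV v := ⟨(v, 1), rfl⟩
  surjE e := ⟨(e, 1), rfl⟩
  bijOut v := by
    refine ⟨fun ε hε => congrArg Prod.fst hε, ?_,
      fun e (he : Δ.ι e = v.1) => ⟨(e, v.2), Prod.ext he rfl, rfl⟩⟩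
    rintro ⟨e₁, g₁⟩ h₁ ⟨e₂, g₂⟩ h₂ (rfl : e₁ = e₂)
    exact Prod.ext rfl ((congrArg Prod.snd h₁).trans (congrArg Prod.snd h₂).symm)
  bijIn v := by
    refine ⟨fun ε hε => congrArg Prod.fst hε, ?_,
      fun e (he : Δ.τ e = v.1) =>
        ⟨(e, v.2 * (γ e)⁻¹), Prod.ext he (inv_mul_cancel_right _ _), rfl⟩⟩
    rintro ⟨e₁, g₁⟩ h₁ ⟨e₂, g₂⟩ h₂ (rfl : e₁ = e₂)
    exact Prod.ext rfl
      (mul_right_cancel ((congrArg Prod.snd h₁).trans (congrArg Prod.snd h₂).symm))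

section Derived

variable {Δ : MGraph} {G : Type} [Group G]

theorem derivedGraph_endOf_snd (γ : Δ.E → G) {v : (derivedGraph Δ γ).V}
    {l : List ((derivedGraph Δ γ).E × Bool)} (hl : chain (derivedGraph Δ γ) v l) :
    (endOf (derivedGraph Δ γ) v l).2 = v.2 * stepsVoltage γ (l.map (derivedProj Δ γ).mapStep) := by
  induction l generalizing v with
  | nil => simp [endOf, stepsVoltage]
  | cons s rest ih =>
    obtain ⟨⟨e, g⟩, b⟩ := s
    obtain ⟨rfl, hrest⟩ := hl
    change (endOf _ _ rest).2 = _
    rw [ih hrest, List.map_cons, stepsVoltage_cons]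
    cases b <;> simp [stepSrc, stepTgt, derivedGraph, derivedProj, Hom.mapStep, mul_assoc]

theorem derivedProj_isGoodCovering (γ : Δ.E → G) : IsGoodCovering γ (derivedProj Δ γ) := by
  rintro p hp hvolt q rfl
  refine Prod.ext ?_ ?_
  · change (derivedProj Δ γ).onV (endOf _ q.first q.steps) = _
    rw [← endOf_map]
    exact hp
  · change (endOf _ q.first q.steps).2 = _
    rw [derivedGraph_endOf_snd γ q.ok]
    exact mul_eq_left.mpr hvolt

theorem IsGoodCovering.pathLiftRel_unique {Δtop : MGraph} {γ : Δ.E → G} {μ : Hom Δtop Δ}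
    (hgood : IsGoodCovering γ μ) (hμ : IsLocallyBijective μ) {v₀ : (derivedGraph Δ γ).V}
    {vtop : Δtop.V} (hv : μ.onV vtop = v₀.1) {v : (derivedGraph Δ γ).V} {w w' : Δtop.V}
    (h : PathLiftRel (derivedProj Δ γ) μ v₀ vtop v w)
    (h' : PathLiftRel (derivedProj Δ γ) μ v₀ vtop v w') : w = w' := by
  have hend : μ.onV w = μ.onV w' := (h.onV_eq hv).trans (h'.onV_eq hv).symm
  obtain ⟨l, m, hl, hlv, hm, hmap, rfl⟩ := h
  obtain ⟨l', m', hl', hlv', hm', hmap', rfl⟩ := h'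
  refine hgood.endOf_lift_eq hμ hm hm' hend ?_
  have hsnd := derivedGraph_endOf_snd γ hl
  rw [hlv, ← hlv', derivedGraph_endOf_snd γ hl'] at hsnd
  rw [hmap, hmap', mul_left_cancel hsnd]

end Derived

theorem IsGoodCovering.of_comp {Γ Δ Δtop : MGraph} {G : Type} [Group G] {γ : Δ.E → G}
    {μ : Hom Δtop Δ} {ψ : Hom Γ Δtop} (hgood : IsGoodCovering γ (μ.comp ψ))
    (hφ : IsLocallyBijective (μ.comp ψ)) (hμ : IsLocallyBijective μ)
    (hψ : Function.Surjective ψ.onV) : IsGoodCovering γ μ := by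
  rintro p hp hvolt q rfl
  obtain ⟨u, hu⟩ := hψ q.first
  obtain ⟨r, hr, hrmap⟩ := hφ.exists_lift (v := u)
    (show chain Δ (μ.onV (ψ.onV u)) _ by rw [hu]; exact μ.chain_map _ _ q.ok)
  have hr_cyclic : endOf Γ u r = u :=
    hgood _ hp hvolt ⟨u, r, hr⟩ (Walk.ext (congrArg μ.onV hu) hrmap)
  -- `q` is the `ψ`-image of the cyclic lift `r`
  have hψr : r.map ψ.mapStep = q.steps :=
    hμ.lift_unique (hu ▸ ψ.chain_map r u hr) q.ok (by rw [List.map_map]; exact hrmap)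
  change endOf Δtop q.first q.steps = q.first
  rw [← hψr, ← hu, endOf_map, hr_cyclic]

/-- Let `(Δ, γ)` be a voltage graph with connected derived graph
`Γ = Δ ×_γ G`, `φ : Γ → Δ` the canonical covering, `v₀` a base vertex of `Γ` with
`φ(v₀) = v_Δ`, and `μ : Δ_⊤ → Δ` a covering with `Δ_⊤` connected and `μ(v_⊤) = v_Δ`.
Then the path-lifting map `ν : Γ → Δ_⊤` is well defined and a covering with
`μ ∘ ν = φ` and `ν(v₀) = v_⊤` if and only if `μ` is a good covering of `(Δ, γ)`. -/
theorem exists_factoring_covering_iff_good {Δ Δtop : MGraph} {G : Type} [Group G]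
    (γ : Δ.E → G) (hΓconn : Connected (derivedGraph Δ γ))
    (μ : Hom Δtop Δ) (hμ : IsCovering μ) (htop : Connected Δtop)
    (v₀ : (derivedGraph Δ γ).V) (vtop : Δtop.V) (hv : μ.onV vtop = v₀.1) :
    (∃ ν : Hom (derivedGraph Δ γ) Δtop,
      IsCovering ν ∧ μ.comp ν = derivedProj Δ γ ∧ ν.onV v₀ = vtop) ↔
    IsGoodCovering γ μ := by
  have hφ := (derivedProj_isCovering Δ γ).isLocallyBijective
  have hφ_good := derivedProj_isGoodCovering γ
  constructor
  · rintro ⟨ν, hν, hcomp, -⟩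
    rw [← hcomp] at hφ hφ_good
    exact hφ_good.of_comp hφ hμ.isLocallyBijective hν.surjV
  · intro hgood
    obtain ⟨ν, hcomp, hν₀⟩ := exists_hom_comp_eq_of_pathLiftRel_unique hμ.isLocallyBijective
      hΓconn hv (hgood.pathLiftRel_unique hμ.isLocallyBijective hv)
    rw [← hcomp] at hφ
    exact ⟨ν, (hμ.isLocallyBijective.of_comp hφ).isCovering_of_connected htop v₀, hcomp, hν₀⟩

end VG
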